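/- arXiv:1712.02872 — 5 statements merged into one kernel-verified Lean document; each statement's English description precedes it below -/
import Mathlib

section
/- If the active and dormant failure times of the spare coincide (B_a = B_d), then the warm spare gate WSP(A, B_a, B_d) equals the hot spare gate HSP(A, B_a) = max(A, B_a). -/
noncomputable def dAND (A B : EReal) : EReal := max A B
noncomputable def dOR (A B : EReal) : EReal := min A B
noncomputable def dBEFORE (A B : EReal) : EReal := if A < B then A else ⊤
noncomputable def dIBEFORE (A B : EReal) : EReal := if A ≤ B then A else ⊤
noncomputable def dSIMULT (A B : EReal) : EReal := if A = B then A else ⊤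
noncomputable def NEVER : EReal := ⊤

noncomputable def WSP (A Ba Bd : EReal) : EReal :=
  dOR (dOR (dOR (dAND A (dBEFORE Bd A)) (dAND Ba (dBEFORE A Ba))) (dSIMULT A Ba)) (dSIMULT A Bd)

noncomputable def HSP (A B : EReal) : EReal := max A B


/-! With a single spare failure time `B`, the three disjuncts of `WSP A B B` (the spare fails
first, `A` fails first, both fail together) are mutually exclusive: exactly one of them is
finite, and it is the later of `A` and `B`. -/

section FailureTimes

variable {A B : EReal}

@[simp]
theorem dOR_top_left : dOR ⊤ A = A := min_top_left _

@[simp]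
theorem dOR_top_right : dOR A ⊤ = A := min_top_right _

@[simp]
theorem dOR_self : dOR A A = A := min_self _

theorem dAND_dBEFORE_of_lt (h : B < A) : dAND A (dBEFORE B A) = A := by
  rw [dAND, dBEFORE, if_pos h, max_eq_left h.le]

theorem dAND_dBEFORE_of_le (h : A ≤ B) : dAND A (dBEFORE B A) = ⊤ := by
  rw [dAND, dBEFORE, if_neg h.not_gt, max_top_right]

@[simp]
theorem dSIMULT_self : dSIMULT A A = A := if_pos rfl

theorem dSIMULT_of_ne (h : A ≠ B) : dSIMULT A B = ⊤ := if_neg h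

end FailureTimes

theorem wsp_eq_hsp (A Ba Bd : EReal) (h : Ba = Bd) : WSP A Ba Bd = HSP A Ba := by
  subst h
  rcases lt_trichotomy A Ba with hlt | rfl | hgt
  · simp [WSP, HSP, dAND_dBEFORE_of_le hlt.le, dAND_dBEFORE_of_lt hlt, dSIMULT_of_ne hlt.ne,
      hlt.le]
  · simp [WSP, HSP, dAND_dBEFORE_of_le le_rfl]
  · simp [WSP, HSP, dAND_dBEFORE_of_lt hgt, dAND_dBEFORE_of_le hgt.le, dSIMULT_of_ne hgt.ne',
      hgt.le]
end

section
/- For all extended-real failure times A, B, C: A ◁ (B ◁ C) = (A ◁ B) + (A·B·(C ⊴ B)). -/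
lemma dBEFORE_of_lt {A B : EReal} (h : A < B) : dBEFORE A B = A := if_pos h

lemma dBEFORE_of_le {A B : EReal} (h : B ≤ A) : dBEFORE A B = ⊤ := if_neg h.not_gt

lemma dBEFORE_top (A : EReal) : dBEFORE A ⊤ = A := by
  rcases lt_or_eq_of_le (le_top : A ≤ ⊤) with h | rfl
  · exact dBEFORE_of_lt h
  · exact dBEFORE_of_le le_rfl

lemma dIBEFORE_of_le {A B : EReal} (h : A ≤ B) : dIBEFORE A B = A := if_pos h

lemma dIBEFORE_of_lt {A B : EReal} (h : B < A) : dIBEFORE A B = ⊤ := if_neg h.not_ge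

lemma min_dBEFORE_max (A B : EReal) : min (dBEFORE A B) (max A B) = A := by
  rcases lt_or_ge A B with h | h
  · rw [dBEFORE_of_lt h, max_eq_right h.le, min_eq_left h.le]
  · rw [dBEFORE_of_le h, max_eq_left h, min_eq_right le_top]

theorem before_before (A B C : EReal) :
    dBEFORE A (dBEFORE B C) = dOR (dBEFORE A B) (dAND (dAND A B) (dIBEFORE C B)) := by
  rcases lt_or_ge B C with h | h
  · rw [dBEFORE_of_lt h, dIBEFORE_of_lt h, dOR, dAND, max_top_right, min_top_right]
  · rw [dBEFORE_of_le h, dBEFORE_top, dIBEFORE_of_le h, dOR, dAND, dAND,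
      max_eq_left (h.trans (le_max_right A B)), min_dBEFORE_max]
end

section
/- For all extended-real failure times A, B, C: (A ◁ B) ◁ C = (A ◁ B)·(A ◁ C). -/
theorem le_dBEFORE (A B : EReal) : A ≤ dBEFORE A B := by
  unfold dBEFORE
  split_ifs
  exacts [le_rfl, le_top]

theorem dBEFORE_top_left (B : EReal) : dBEFORE ⊤ B = ⊤ :=
  if_neg not_top_lt

theorem before_before_left (A B C : EReal) :
    dBEFORE (dBEFORE A B) C = dAND (dBEFORE A B) (dBEFORE A C) := by
  by_cases h : A < B
  · rw [show dBEFORE A B = A from if_pos h, dAND, max_eq_right (le_dBEFORE A C)]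
  · rw [show dBEFORE A B = ⊤ from if_neg h, dBEFORE_top_left, dAND, top_sup_eq]
end

section
/- For all extended-real failure times A, B, C: A ◁ (B·C) = (A ◁ B) + (A ◁ C), i.e., Before distributes over AND (max) as OR (min). -/
theorem before_and (A B C : EReal) :
    dBEFORE A (dAND B C) = dOR (dBEFORE A B) (dBEFORE A C) := by
  unfold dBEFORE dAND dOR
  by_cases hB : A < B <;> by_cases hC : A < C <;> simp [hB, hC]
end

section
/- Absorption with Before: for all extended-real failure times A, B: A + (A ◁ B) = A and A·(A ◁ B) = A ◁ B. -/
theorem absorb_before (A B : EReal) :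
    dOR A (dBEFORE A B) = A ∧ dAND A (dBEFORE A B) = dBEFORE A B :=
  ⟨min_eq_left (le_dBEFORE A B), max_eq_right (le_dBEFORE A B)⟩
end
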